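/- arXiv:1101.2233 — 4 statements merged into one kernel-verified Lean document; each statement's English description precedes it below -/
import Mathlib

section
/- (Generalized Livens theorem, local version.) Let M = ℝⁿ, E with fiber ℝᵐ, structure functions ρ^a_i, σ^a_i, c^k_{ij} smooth on ℝⁿ, and H : ℝⁿ × ℝᵐ → ℝ smooth. Let Γ(t) = (x(t), y(t), ξ(t)) ∈ ℝⁿ × ℝᵐ × ℝᵐ, t ∈ [t₀, t₁], be smooth with ẋ^a(t) = ρ^a_i(x(t)) y^i(t) (admissibility). Suppose that for all smooth f : [t₀,t₁] → ℝᵐ with f(t₀) = f(t₁) = 0 and all smooth h : [t₀,t₁] → ℝᵐ, one has ∫_{t₀}^{t₁} [ (ḟ^k + c^k_{ij}(x) y^i f^j) ξ_k + y^k h_k − σ^a_i(x) f^i ∂H/∂x^a(x,ξ) − h_k ∂H/∂ξ_k(x,ξ) ] dt = 0. Then y^k(t) = ∂H/∂ξ_k(x(t), ξ(t)), ẋ^a = ρ^a_k(x) ∂H/∂ξ_k(x,ξ), and ξ̇_j = ξ_k c^k_{ij}(x) ∂H/∂ξ_i(x,ξ) − σ^a_j(x) ∂H/∂x^a(x,ξ)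 for all t ∈ [t₀,t₁]. -/
open scoped BigOperators
open MeasureTheory Set Metric intervalIntegral

lemma fund_aux {t₀ t₁ : ℝ} (ht : t₀ < t₁) {g : ℝ → ℝ} (hg : Continuous g)
    (hz : ∀ φ : ℝ → ℝ, ContDiff ℝ (⊤ : ℕ∞) φ → φ t₀ = 0 → φ t₁ = 0 →
      (∫ t in t₀..t₁, φ t * g t) = 0) :
    ∀ t ∈ Set.Icc t₀ t₁, g t = 0 := by
  have hIoo : ∀ s ∈ Set.Ioo t₀ t₁, g s = 0 := by
    intro s hs
    by_contra hgs
    have hU : IsOpen {t | 0 < g s * g t} :=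
      isOpen_lt continuous_const (continuous_const.mul hg)
    have hsU : s ∈ {t | 0 < g s * g t} := mul_self_pos.2 hgs
    obtain ⟨r, hr, hball⟩ := Metric.isOpen_iff.1 (hU.inter isOpen_Ioo) s ⟨hsU, hs⟩
    set b : ContDiffBump s := ⟨r/2, r, by positivity, by linarith⟩ with hb
    have hsupp : Function.support (b : ℝ → ℝ) = ball s r := b.support_eq
    have hb0 : ∀ t, t ∉ ball s r → (b : ℝ → ℝ) t = 0 := by
      intro t htb
      rw [← Function.notMem_support, hsupp]; exact htb
    have ht₀ : (t₀ : ℝ) ∉ ball s r := fun hh => (hball hh).2.1.ne' rfl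
    have ht₁ : (t₁ : ℝ) ∉ ball s r := fun hh => (hball hh).2.2.ne rfl
    have h0 := hz b b.contDiff (hb0 _ ht₀) (hb0 _ ht₁)
    -- F nonneg
    set F : ℝ → ℝ := fun t => (b : ℝ → ℝ) t * (g s * g t) with hF
    have hFc : Continuous F := b.continuous.mul (continuous_const.mul hg)
    have hFnn : ∀ t, 0 ≤ F t := by
      intro t
      by_cases htb : t ∈ ball s r
      · exact mul_nonneg b.nonneg (hball htb).1.le
      · simp [hF, hb0 t htb]
    have hFint : (∫ t in t₀..t₁, F t) = 0 := by
      have : (∫ t in t₀..t₁, F t) = g s * ∫ t in t₀..t₁, (b : ℝ → ℝ) t * g t := by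
        rw [← intervalIntegral.integral_const_mul]
        apply intervalIntegral.integral_congr
        intro t _; simp [hF]; ring
      rw [this, h0, mul_zero]
    have hFpos : 0 < ∫ t in t₀..t₁, F t := by
      rw [intervalIntegral.integral_pos_iff_support_of_nonneg_ae
        (Filter.Eventually.of_forall hFnn) (hFc.intervalIntegrable _ _)]
      refine ⟨ht, ?_⟩
      have hsub : ball s (r/2) ⊆ Function.support F ∩ Set.Ioc t₀ t₁ := by
        intro t htb
        have htb' : t ∈ ball s r := ball_subset_ball (by linarith) htb
        constructor
        · have h1 : (b : ℝ → ℝ) t = 1 := b.one_of_mem_closedBall (ball_subset_closedBall htb)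
          have h2 : 0 < g s * g t := (hball htb').1
          simp only [Function.mem_support, hF, h1, one_mul]
          exact h2.ne'
        · exact Set.Ioo_subset_Ioc_self (hball htb').2
      calc (0:ENNReal) < volume (ball s (r/2)) := by
              rw [Real.volume_ball]; exact ENNReal.ofReal_pos.2 (by linarith)
        _ ≤ volume (Function.support F ∩ Set.Ioc t₀ t₁) := measure_mono hsub
    exact hFpos.ne' hFint
  intro t htI
  have hcl : Set.Icc t₀ t₁ ⊆ closure (Set.Ioo t₀ t₁) := by
    rw [closure_Ioo ht.ne]
  have : Set.EqOn g 0 (closure (Set.Ioo t₀ t₁)) :=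
    Set.EqOn.closure (fun u hu => hIoo u hu) hg continuous_const
  exact this (hcl htI)

/-- Generalized Livens theorem, local version.  If the first variation of
the action `∫ ⟨y,ξ⟩ − H(x,ξ) dt` vanishes on all admissible variations (with endpoint-
fixed `f`-part and free `h`-part), then the velocity–momentum relation `y = ∂H/∂ξ`
holds and `(x,ξ)` solves the generalized Hamilton equations. -/

theorem generalized_livens {n m : ℕ}
    (ρ σ : Fin n → Fin m → (Fin n → ℝ) → ℝ)
    (c : Fin m → Fin m → Fin m → (Fin n → ℝ) → ℝ)
    (hρ : ∀ a i, ContDiff ℝ (⊤ : ℕ∞) (ρ a i)) (hσ : ∀ a i, ContDiff ℝ (⊤ : ℕ∞) (σ a i))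
    (hc : ∀ i j k, ContDiff ℝ (⊤ : ℕ∞) (c i j k))
    (H : (Fin n → ℝ) × (Fin m → ℝ) → ℝ) (hH : ContDiff ℝ (⊤ : ℕ∞) H)
    (t₀ t₁ : ℝ) (ht : t₀ < t₁)
    (x : ℝ → Fin n → ℝ) (y ξ : ℝ → Fin m → ℝ)
    (hx : ContDiff ℝ (⊤ : ℕ∞) x) (hy : ContDiff ℝ (⊤ : ℕ∞) y)
    (hξ : ContDiff ℝ (⊤ : ℕ∞) ξ)
    -- admissibility: ẋ^a = ρ^a_i(x) y^i
    (hadm : ∀ t ∈ Set.Icc t₀ t₁, ∀ a,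
      deriv (fun τ => x τ a) t = ∑ i, ρ a i (x t) * y t i)
    -- vanishing of the first variation
    (hvar : ∀ f h : ℝ → Fin m → ℝ, ContDiff ℝ (⊤ : ℕ∞) f → ContDiff ℝ (⊤ : ℕ∞) h →
      f t₀ = 0 → f t₁ = 0 →
      (∫ t in t₀..t₁,
        ((∑ k, (deriv (fun τ => f τ k) t
              + ∑ i, ∑ j, c i j k (x t) * y t i * f t j) * ξ t k)
        + (∑ k, y t k * h t k)
        - (∑ a, ∑ i, σ a i (x t) * f t i
            * fderiv ℝ H (x t, ξ t) ((Pi.single a 1 : Fin n → ℝ), (0 : Fin m → ℝ)))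
        - (∑ k, h t k
            * fderiv ℝ H (x t, ξ t) ((0 : Fin n → ℝ), (Pi.single k 1 : Fin m → ℝ))))) = 0) :
    ∀ t ∈ Set.Icc t₀ t₁,
      (∀ k, y t k = fderiv ℝ H (x t, ξ t) ((0 : Fin n → ℝ), (Pi.single k 1 : Fin m → ℝ))) ∧
      (∀ a, deriv (fun τ => x τ a) t
        = ∑ k, ρ a k (x t)
            * fderiv ℝ H (x t, ξ t) ((0 : Fin n → ℝ), (Pi.single k 1 : Fin m → ℝ))) ∧
      (∀ j, deriv (fun τ => ξ τ j) t
        = (∑ i, ∑ k, ξ t k * c i j k (x t)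
            * fderiv ℝ H (x t, ξ t) ((0 : Fin n → ℝ), (Pi.single i 1 : Fin m → ℝ)))
          - ∑ a, σ a j (x t)
            * fderiv ℝ H (x t, ξ t) ((Pi.single a 1 : Fin n → ℝ), (0 : Fin m → ℝ))) := by
  have h1 : (1 : WithTop ℕ∞) ≤ ((⊤ : ℕ∞) : WithTop ℕ∞) := by exact_mod_cast le_top
  set D : Fin m → ℝ → ℝ := fun k t =>
    fderiv ℝ H (x t, ξ t) ((0 : Fin n → ℝ), (Pi.single k 1 : Fin m → ℝ)) with hD
  set Dx : Fin n → ℝ → ℝ := fun a t =>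
    fderiv ℝ H (x t, ξ t) ((Pi.single a 1 : Fin n → ℝ), (0 : Fin m → ℝ)) with hDx
  have hxc : Continuous x := hx.continuous
  have hyc : Continuous y := hy.continuous
  have hξc : Continuous ξ := hξ.continuous
  have hxξ : Continuous (fun t => (x t, ξ t)) := hxc.prodMk hξc
  have hfd : Continuous (fun t => fderiv ℝ H (x t, ξ t)) :=
    (hH.continuous_fderiv (by simp)).comp hxξ
  have hDc : ∀ k, Continuous (D k) := fun k =>
    (ContinuousLinearMap.apply ℝ ℝ
      ((0 : Fin n → ℝ), (Pi.single k 1 : Fin m → ℝ))).continuous.comp hfd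
  have hDxc : ∀ a, Continuous (Dx a) := fun a =>
    (ContinuousLinearMap.apply ℝ ℝ
      ((Pi.single a 1 : Fin n → ℝ), (0 : Fin m → ℝ))).continuous.comp hfd
  have hyk : ∀ k, Continuous (fun t => y t k) := fun k =>
    (continuous_apply k).comp hyc
  have hξk : ∀ k, Continuous (fun t => ξ t k) := fun k =>
    (continuous_apply k).comp hξc
  have hξkC : ∀ k, ContDiff ℝ (⊤ : ℕ∞) (fun t => ξ t k) := fun k =>
    (contDiff_pi.1 hξ) k
  have hξk' : ∀ k, Continuous (deriv (fun t => ξ t k)) := fun k =>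
    (hξkC k).continuous_deriv h1
  -- STEP 1: velocity-momentum relation
  have hY : ∀ t ∈ Set.Icc t₀ t₁, ∀ k, y t k = D k t := by
    intro t htI k
    have key : ∀ t' ∈ Set.Icc t₀ t₁, y t' k - D k t' = 0 := by
      apply fund_aux ht ((hyk k).sub (hDc k))
      intro ψ hψ hψ₀ hψ₁
      have hvz := hvar (fun _ => (0 : Fin m → ℝ)) (fun t => Pi.single k (ψ t))
        contDiff_const
        (contDiff_pi.2 (fun j => by
          by_cases hjk : j = k
          · subst hjk; simpa [Pi.single_apply] using hψ
          · simp only [Pi.single_apply, if_neg hjk]; exact contDiff_const))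
        rfl rfl
      rw [← hvz]
      apply intervalIntegral.integral_congr
      intro u _
      simp only [Pi.zero_apply, mul_zero, zero_mul, Finset.sum_const_zero, add_zero,
        deriv_const', zero_add, Pi.single_apply, mul_ite, ite_mul, mul_one, mul_zero,
        zero_mul, Finset.sum_ite_eq', Finset.mem_univ, if_true, hD, Pi.sub_apply]
      ring
    exact sub_eq_zero.1 (key t htI)
  intro t htI
  refine ⟨fun k => hY t htI k, ?_, ?_⟩
  · intro a
    rw [hadm t htI a]
    exact Finset.sum_congr rfl (fun k _ => by rw [hY t htI k])
  -- STEP 2: Hamilton equation for ξ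
  · intro j
    set B : ℝ → ℝ := fun u =>
      (∑ k, (∑ i, c i j k (x u) * y u i) * ξ u k) - ∑ a, σ a j (x u) * Dx a u with hB
    have hBc : Continuous B := by
      apply Continuous.sub
      · exact continuous_finset_sum _ (fun k _ =>
          (continuous_finset_sum _ (fun i _ =>
            ((hc i j k).continuous.comp hxc).mul (hyk i))).mul (hξk k))
      · exact continuous_finset_sum _ (fun a _ =>
          ((hσ a j).continuous.comp hxc).mul (hDxc a))
    have key : ∀ t' ∈ Set.Icc t₀ t₁, B t' - deriv (fun τ => ξ τ j) t' = 0 := by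
      apply fund_aux ht (hBc.sub (hξk' j))
      intro φ hφ hφ₀ hφ₁
      have hφc : Continuous φ := hφ.continuous
      have hφ' : Continuous (deriv φ) := hφ.continuous_deriv h1
      have hvz := hvar (fun u => Pi.single j (φ u)) (fun _ => (0 : Fin m → ℝ))
        (contDiff_pi.2 (fun k => by
          by_cases hkj : k = j
          · subst hkj; simpa [Pi.single_apply] using hφ
          · simp only [Pi.single_apply, if_neg hkj]; exact contDiff_const))
        contDiff_const (by simp [hφ₀]) (by simp [hφ₁])
      have hderiv : ∀ k : Fin m,
          deriv (fun τ => if k = j then φ τ else (0:ℝ)) =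
            fun u => if k = j then deriv φ u else 0 := by
        intro k
        by_cases hkj : k = j <;> funext u <;> simp [hkj]
      have hvz' : (∫ u in t₀..t₁, (deriv φ u * ξ u j + φ u * B u)) = 0 := by
        rw [← hvz]
        apply intervalIntegral.integral_congr
        intro u _
        simp only [Pi.zero_apply, mul_zero, zero_mul, Finset.sum_const_zero,
          add_zero, sub_zero, Pi.single_apply, mul_ite, ite_mul, mul_one, mul_zero,
          zero_mul, Finset.sum_ite_eq', Finset.mem_univ, if_true, hderiv, hB, hDx]
        have l1 : ∑ k, ((if k = j then deriv φ u else 0)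
              + (∑ i, c i j k (x u) * y u i * φ u)) * ξ u k
            = deriv φ u * ξ u j
              + φ u * ∑ k, (∑ i, c i j k (x u) * y u i) * ξ u k := by
          simp only [add_mul, Finset.sum_add_distrib, ite_mul, zero_mul,
            Finset.sum_ite_eq', Finset.mem_univ, if_true]
          congr 1
          rw [Finset.mul_sum]
          refine Finset.sum_congr rfl (fun k _ => ?_)
          simp only [Finset.sum_mul, Finset.mul_sum]
          exact Finset.sum_congr rfl (fun i _ => by ring)
        have l2 : ∑ a, σ a j (x u) * φ u
              * fderiv ℝ H (x u, ξ u) ((Pi.single a 1 : Fin n → ℝ), (0 : Fin m → ℝ))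
            = φ u * ∑ a, σ a j (x u)
              * fderiv ℝ H (x u, ξ u) ((Pi.single a 1 : Fin n → ℝ), (0 : Fin m → ℝ)) := by
          rw [Finset.mul_sum]
          exact Finset.sum_congr rfl (fun a _ => by ring)
        rw [l1, l2]; ring
      have hibp : (∫ u in t₀..t₁,
          (deriv φ u * ξ u j + φ u * deriv (fun τ => ξ τ j) u)) = 0 := by
        rw [intervalIntegral.integral_deriv_mul_eq_sub
          (u := φ) (v := fun τ => ξ τ j)
          (fun u _ => (hφ.differentiable (by simp) u).hasDerivAt)
          (fun u _ => ((hξkC j).differentiable (by simp) u).hasDerivAt)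
          (hφ'.intervalIntegrable _ _) ((hξk' j).intervalIntegrable _ _)]
        rw [hφ₀, hφ₁]; ring
      have heq : (∫ u in t₀..t₁, φ u * (B u - deriv (fun τ => ξ τ j) u))
          = (∫ u in t₀..t₁, (deriv φ u * ξ u j + φ u * B u))
            - ∫ u in t₀..t₁, (deriv φ u * ξ u j + φ u * deriv (fun τ => ξ τ j) u) := by
        rw [← intervalIntegral.integral_sub]
        · apply intervalIntegral.integral_congr
          intro u _; ring
        · exact ((hφ'.mul (hξk j)).add (hφc.mul hBc)).intervalIntegrable _ _
        · exact ((hφ'.mul (hξk j)).add (hφc.mul (hξk' j))).intervalIntegrable _ _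
      show (∫ u in t₀..t₁, φ u * (B u - deriv (fun τ => ξ τ j) u)) = 0
      rw [heq, hvz', hibp, sub_zero]
    have hBt : B t = deriv (fun τ => ξ τ j) t := sub_eq_zero.1 (key t htI)
    rw [← hBt]
    simp only [hB]
    congr 1
    calc ∑ k, (∑ i, c i j k (x t) * y t i) * ξ t k
        = ∑ k, ∑ i, c i j k (x t) * y t i * ξ t k :=
          Finset.sum_congr rfl (fun k _ => Finset.sum_mul _ _ _)
      _ = ∑ i, ∑ k, ξ t k * c i j k (x t) * D i t := by
          rw [Finset.sum_comm]
          exact Finset.sum_congr rfl (fun i _ => Finset.sum_congr rfl (fun k _ => by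
            rw [hY t htI i]; ring))
end

section
/- (Converse of generalized Livens.) With the setup of the generalized Livens theorem, if a smooth curve Γ(t) = (x(t), y(t), ξ(t)) satisfies y^k = ∂H/∂ξ_k(x,ξ), ẋ^a = ρ^a_i(x) y^i, and ξ̇_j = ξ_k c^k_{ij}(x) y^i − σ^a_j(x) ∂H/∂x^a(x,ξ), then for every smooth f : [t₀,t₁] → ℝᵐ vanishing at the endpoints and every smooth h : [t₀,t₁] → ℝᵐ, the first variation ∫_{t₀}^{t₁} [ (ḟ^k + c^k_{ij}(x) y^i f^j) ξ_k + y^k h_k − σ^a_i(x) f^i ∂H/∂x^a − h_k ∂H/∂ξ_k ] dt vanishes. -/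
open scoped BigOperators

theorem livens_alg {n m : ℕ} (df ξv yv h f : Fin m → ℝ) (C : Fin m → Fin m → Fin m → ℝ)
    (S : Fin n → Fin m → ℝ) (P : Fin n → ℝ) :
    (∑ k, (df k + ∑ i, ∑ j, C i j k * yv i * f j) * ξv k)
      + (∑ k, yv k * h k)
      - (∑ a, ∑ i, S a i * f i * P a)
      - (∑ k, h k * yv k)
    = ∑ k, (df k * ξv k
        + f k * ((∑ i, ∑ k', ξv k' * C i k k' * yv i) - ∑ a, S a k * P a)) := by
  have h1 : (∑ k, yv k * h k) = ∑ k, h k * yv k :=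
    Finset.sum_congr rfl fun k _ => mul_comm _ _
  have h2 : (∑ k, (∑ i, ∑ j, C i j k * yv i * f j) * ξv k)
      = ∑ j, f j * (∑ i, ∑ k, ξv k * C i j k * yv i) := by
    simp only [Finset.sum_mul, Finset.mul_sum]
    rw [Finset.sum_comm]
    calc (∑ i : Fin m, ∑ k : Fin m, ∑ j : Fin m, C i j k * yv i * f j * ξv k)
        = ∑ i : Fin m, ∑ j : Fin m, ∑ k : Fin m, C i j k * yv i * f j * ξv k :=
          Finset.sum_congr rfl fun i _ => Finset.sum_comm
      _ = ∑ j : Fin m, ∑ i : Fin m, ∑ k : Fin m, C i j k * yv i * f j * ξv k :=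
          Finset.sum_comm
      _ = ∑ j, ∑ i, ∑ k, f j * (ξv k * C i j k * yv i) :=
          Finset.sum_congr rfl fun j _ => Finset.sum_congr rfl fun i _ =>
            Finset.sum_congr rfl fun k _ => by ring
  have h3 : (∑ a, ∑ i, S a i * f i * P a) = ∑ i, f i * ∑ a, S a i * P a := by
    rw [Finset.sum_comm]
    simp only [Finset.mul_sum]
    exact Finset.sum_congr rfl fun i _ => Finset.sum_congr rfl fun a _ => by ring
  simp only [add_mul, Finset.sum_add_distrib, mul_sub, Finset.sum_sub_distrib, h1, h2, h3]
  ring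


/-- Converse of the generalized Livens theorem.  If `Γ = (x, y, ξ)`
satisfies `y = ∂H/∂ξ`, the admissibility equation `ẋ = ρ(x) y` and the generalized
Hamilton equation for `ξ`, then the first variation vanishes for every admissible
variation with endpoint-fixed `f`-part and free `h`-part. -/
theorem generalized_livens_converse {n m : ℕ}
    (ρ σ : Fin n → Fin m → (Fin n → ℝ) → ℝ)
    (c : Fin m → Fin m → Fin m → (Fin n → ℝ) → ℝ)
    (hρ : ∀ a i, ContDiff ℝ (⊤ : ℕ∞) (ρ a i)) (hσ : ∀ a i, ContDiff ℝ (⊤ : ℕ∞) (σ a i))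
    (hc : ∀ i j k, ContDiff ℝ (⊤ : ℕ∞) (c i j k))
    (H : (Fin n → ℝ) × (Fin m → ℝ) → ℝ) (hH : ContDiff ℝ (⊤ : ℕ∞) H)
    (t₀ t₁ : ℝ) (ht : t₀ < t₁)
    (x : ℝ → Fin n → ℝ) (y ξ : ℝ → Fin m → ℝ)
    (hx : ContDiff ℝ (⊤ : ℕ∞) x) (hy : ContDiff ℝ (⊤ : ℕ∞) y)
    (hξ : ContDiff ℝ (⊤ : ℕ∞) ξ)
    -- velocity–momentum relation: y^k = ∂H/∂ξ_k
    (hleg : ∀ t ∈ Set.Icc t₀ t₁, ∀ k,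
      y t k = fderiv ℝ H (x t, ξ t) ((0 : Fin n → ℝ), (Pi.single k 1 : Fin m → ℝ)))
    -- admissibility: ẋ^a = ρ^a_i(x) y^i
    (hadm : ∀ t ∈ Set.Icc t₀ t₁, ∀ a,
      deriv (fun τ => x τ a) t = ∑ i, ρ a i (x t) * y t i)
    -- Hamilton equation: ξ̇_j = ξ_k c^k_{ij}(x) y^i − σ^a_j(x) ∂H/∂x^a
    (hham : ∀ t ∈ Set.Icc t₀ t₁, ∀ j,
      deriv (fun τ => ξ τ j) t
        = (∑ i, ∑ k, ξ t k * c i j k (x t) * y t i)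
          - ∑ a, σ a j (x t)
            * fderiv ℝ H (x t, ξ t) ((Pi.single a 1 : Fin n → ℝ), (0 : Fin m → ℝ))) :
    ∀ f h : ℝ → Fin m → ℝ, ContDiff ℝ (⊤ : ℕ∞) f → ContDiff ℝ (⊤ : ℕ∞) h →
      f t₀ = 0 → f t₁ = 0 →
      (∫ t in t₀..t₁,
        ((∑ k, (deriv (fun τ => f τ k) t
              + ∑ i, ∑ j, c i j k (x t) * y t i * f t j) * ξ t k)
        + (∑ k, y t k * h t k)
        - (∑ a, ∑ i, σ a i (x t) * f t i
            * fderiv ℝ H (x t, ξ t) ((Pi.single a 1 : Fin n → ℝ), (0 : Fin m → ℝ)))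
        - (∑ k, h t k
            * fderiv ℝ H (x t, ξ t) ((0 : Fin n → ℝ), (Pi.single k 1 : Fin m → ℝ))))) = 0 := by
  intro f h hf hh hf0 hf1
  -- component smoothness
  have hfk : ∀ k, ContDiff ℝ (⊤ : ℕ∞) (fun τ => f τ k) := fun k => contDiff_pi.mp hf k
  have hξk : ∀ k, ContDiff ℝ (⊤ : ℕ∞) (fun τ => ξ τ k) := fun k => contDiff_pi.mp hξ k
  have hhk : ∀ k, ContDiff ℝ (⊤ : ℕ∞) (fun τ => h τ k) := fun k => contDiff_pi.mp hh k
  have hyk : ∀ k, ContDiff ℝ (⊤ : ℕ∞) (fun τ => y τ k) := fun k => contDiff_pi.mp hy k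
  -- continuity of the fderiv-of-H terms along the curve
  have hcurve : Continuous fun t => (x t, ξ t) := hx.continuous.prodMk hξ.continuous
  have hfdH : Continuous fun t => fderiv ℝ H (x t, ξ t) :=
    (hH.continuous_fderiv (by simp)).comp hcurve
  have hfdHv : ∀ v : (Fin n → ℝ) × (Fin m → ℝ),
      Continuous fun t => fderiv ℝ H (x t, ξ t) v :=
    fun v => hfdH.clm_apply continuous_const
  -- the integrand as a function
  set G : ℝ → ℝ := fun t =>
        ((∑ k, (deriv (fun τ => f τ k) t
              + ∑ i, ∑ j, c i j k (x t) * y t i * f t j) * ξ t k)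
        + (∑ k, y t k * h t k)
        - (∑ a, ∑ i, σ a i (x t) * f t i
            * fderiv ℝ H (x t, ξ t) ((Pi.single a 1 : Fin n → ℝ), (0 : Fin m → ℝ)))
        - (∑ k, h t k
            * fderiv ℝ H (x t, ξ t) ((0 : Fin n → ℝ), (Pi.single k 1 : Fin m → ℝ)))) with hG
  have hGcont : Continuous G := by
    apply Continuous.sub
    apply Continuous.sub
    apply Continuous.add
    · exact continuous_finset_sum _ fun k _ =>
        (((hfk k).continuous_deriv (by exact_mod_cast (le_top : (1:ℕ∞) ≤ ⊤))).add
          (continuous_finset_sum _ fun i _ => continuous_finset_sum _ fun j _ =>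
            (((hc i j k).continuous.comp hx.continuous).mul (hyk i).continuous).mul
              (hfk j).continuous)).mul (hξk k).continuous
    · exact continuous_finset_sum _ fun k _ => (hyk k).continuous.mul (hhk k).continuous
    · exact continuous_finset_sum _ fun a _ => continuous_finset_sum _ fun i _ =>
        (((hσ a i).continuous.comp hx.continuous).mul (hfk i).continuous).mul (hfdHv _)
    · exact continuous_finset_sum _ fun k _ => (hhk k).continuous.mul (hfdHv _)
  -- F(t) = ⟨f, ξ⟩ and its derivative
  set F : ℝ → ℝ := fun t => ∑ k, f t k * ξ t k with hF
  have hFd : ∀ t ∈ Set.uIcc t₀ t₁, HasDerivAt F (G t) t := by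
    intro t htmem
    have htI : t ∈ Set.Icc t₀ t₁ := by rwa [Set.uIcc_of_le ht.le] at htmem
    have hDF : HasDerivAt F
        (∑ k, (deriv (fun τ => f τ k) t * ξ t k
          + f t k * deriv (fun τ => ξ τ k) t)) t := by
      apply HasDerivAt.fun_sum
      intro k _
      exact (((hfk k).differentiable (by simp) t).hasDerivAt).mul
        (((hξk k).differentiable (by simp) t).hasDerivAt)
    convert hDF using 1
    rw [hG]
    have e1 : ∀ k, deriv (fun τ => ξ τ k) t
        = (∑ i, ∑ k', ξ t k' * c i k k' (x t) * y t i)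
          - ∑ a, σ a k (x t)
            * fderiv ℝ H (x t, ξ t) ((Pi.single a 1 : Fin n → ℝ), (0 : Fin m → ℝ)) :=
      hham t htI
    have e2 : ∀ k, (fderiv ℝ H (x t, ξ t)
        ((0 : Fin n → ℝ), (Pi.single k 1 : Fin m → ℝ)) : ℝ) = y t k :=
      fun k => (hleg t htI k).symm
    simp only [e1, e2]
    exact livens_alg (fun k => deriv (fun τ => f τ k) t) (ξ t) (y t) (h t) (f t)
      (fun i j k => c i j k (x t))
      (fun a i => σ a i (x t))
      (fun a => fderiv ℝ H (x t, ξ t) ((Pi.single a 1 : Fin n → ℝ), (0 : Fin m → ℝ)))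
  have hint : IntervalIntegrable G MeasureTheory.volume t₀ t₁ :=
    hGcont.intervalIntegrable _ _
  have := intervalIntegral.integral_eq_sub_of_hasDerivAt hFd hint
  rw [this, hF]
  simp [hf0, hf1]
end

section
/- (Nonholonomically constrained Hamilton equations from restricted variations.) With M = ℝⁿ, fiber ℝᵐ, smooth structure functions ρ^a_i, σ^a_i, c^k_{ij}, smooth H : ℝⁿ × ℝᵐ → ℝ, and constraint functions Φ^s : ℝⁿ × ℝᵐ → ℝ (s = 1..r) whose fiber-differentials {∂Φ^s/∂y} are linearly independent along the curve: suppose Γ(t) = (x(t), y(t), ξ(t)) is smooth, admissible (ẋ = ρ(x)y), and the first variation ∫ f^j(−ξ̇_j − σ^a_j ∂H/∂x^a + ξ_k c^k_{ij} y^i) + h_k(y^k − ∂H/∂ξ_k) dt vanishes for all smooth h and all smooth f vanishing at endpoints with Σ_j ∂Φ^s/∂y^j(x(t), y(t)) f^j(t) = 0 for all s, t (d'Alembert condition), and Φ^s(x(t), y(t)) = 0 for all t. Then y^k = ∂H/∂ξ_k(x,ξ), and there exist continuous multipliers μ_s(t) such that ξ̇_j = ξ_k c^k_{ij}(x) ∂H/∂ξ_i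 − σ^a_j(x) ∂H/∂x^a + μ_s(t) ∂Φ^s/∂y^j(x, ∂H/∂ξ), together with ẋ^a = ρ^a_k(x) ∂H/∂ξ_k and Φ^s(x, ∂H/∂ξ) = 0. -/
open scoped BigOperators

lemma nh_eqOn_Icc {g : ℝ → ℝ} (hg : Continuous g) {a b : ℝ} (hab : a < b)
    (h : ∀ t ∈ Set.Ioo a b, g t = 0) : ∀ t ∈ Set.Icc a b, g t = 0 := by
  have h1 : Set.EqOn g 0 (Set.Ioo a b) := fun t ht => h t ht
  have h2 := h1.closure hg continuous_const
  rw [closure_Ioo hab.ne] at h2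
  exact fun t ht => h2 ht

lemma nh_zero_of_integral_zero {g : ℝ → ℝ} (hg : Continuous g) {a b : ℝ} (hab : a < b)
    (h0 : ∀ t ∈ Set.Icc a b, 0 ≤ g t) (hint : (∫ t in a..b, g t) = 0) :
    ∀ t ∈ Set.Icc a b, g t = 0 := by
  have hIoo : ∀ t ∈ Set.Ioo a b, g t = 0 := by
    intro c hc
    by_contra hne
    have hcpos : 0 < g c :=
      lt_of_le_of_ne (h0 c (Set.Ioo_subset_Icc_self hc)) (Ne.symm hne)
    obtain ⟨δ, hδpos, hball⟩ : ∃ δ > 0, Metric.ball c δ ⊆ g ⁻¹' Set.Ioi 0 := by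
      have : IsOpen (g ⁻¹' Set.Ioi 0) := isOpen_Ioi.preimage hg
      exact Metric.isOpen_iff.mp this c (by simpa using hcpos)
    set δ' := min δ (min (c - a) (b - c)) with hδ'
    have hδ'pos : 0 < δ' := lt_min hδpos (lt_min (by linarith [hc.1]) (by linarith [hc.2]))
    have hsub : Set.Ioo (c - δ') (c + δ') ⊆ g ⁻¹' Set.Ioi 0 := by
      intro t ht
      apply hball
      rw [Real.ball_eq_Ioo]
      have hδ'le : δ' ≤ δ := min_le_left _ _
      exact ⟨by linarith [ht.1], by linarith [ht.2]⟩
    have ha' : a ≤ c - δ' := by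
      have h2 : δ' ≤ c - a := le_trans (min_le_right _ _) (min_le_left _ _)
      linarith
    have hb' : c + δ' ≤ b := by
      have h2 : δ' ≤ b - c := le_trans (min_le_right _ _) (min_le_right _ _)
      linarith
    have hi : ∀ u v : ℝ, IntervalIntegrable g MeasureTheory.volume u v :=
      fun u v => hg.intervalIntegrable u v
    have hmid : 0 < ∫ t in (c - δ')..(c + δ'), g t :=
      intervalIntegral.intervalIntegral_pos_of_pos_on (hi _ _)
        (fun t ht => hsub ht) (by linarith)
    have h1 : 0 ≤ ∫ t in a..(c - δ'), g t :=
      intervalIntegral.integral_nonneg ha'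
        (fun u hu => h0 u ⟨hu.1, by linarith [hu.2, hc.2]⟩)
    have h2 : 0 ≤ ∫ t in (c + δ')..b, g t :=
      intervalIntegral.integral_nonneg hb'
        (fun u hu => h0 u ⟨by linarith [hu.1, hc.1], hu.2⟩)
    have hsplit : (∫ t in a..b, g t)
        = (∫ t in a..(c - δ'), g t) + (∫ t in (c - δ')..(c + δ'), g t)
          + ∫ t in (c + δ')..b, g t := by
      rw [intervalIntegral.integral_add_adjacent_intervals (hi _ _) (hi _ _),
        intervalIntegral.integral_add_adjacent_intervals (hi _ _) (hi _ _)]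
    rw [hsplit] at hint
    linarith
  exact nh_eqOn_Icc hg hab hIoo

lemma nh_contDiff_det {r : ℕ} {M : ℝ → Matrix (Fin r) (Fin r) ℝ}
    (h : ∀ i j, ContDiff ℝ (⊤ : ℕ∞) fun t => M t i j) :
    ContDiff ℝ (⊤ : ℕ∞) fun t => (M t).det := by
  simp only [Matrix.det_apply']
  apply ContDiff.sum
  intro σ _
  exact contDiff_const.mul (contDiff_prod fun i _ => h (σ i) i)

lemma nh_contDiff_adjugate {r : ℕ} {M : ℝ → Matrix (Fin r) (Fin r) ℝ}
    (h : ∀ i j, ContDiff ℝ (⊤ : ℕ∞) fun t => M t i j) (i j : Fin r) :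
    ContDiff ℝ (⊤ : ℕ∞) fun t => (M t).adjugate i j := by
  simp only [Matrix.adjugate_apply]
  apply nh_contDiff_det
  intro a b
  rcases eq_or_ne a j with rfl | hne
  · simp only [Matrix.updateRow_self]
    exact contDiff_const
  · simp only [Matrix.updateRow_ne hne]
    exact h a b

lemma nh_contDiff_fderiv_apply {n m : ℕ} {F : (Fin n → ℝ) × (Fin m → ℝ) → ℝ}
    (hF : ContDiff ℝ (⊤ : ℕ∞) F) {p : ℝ → (Fin n → ℝ) × (Fin m → ℝ)}
    (hp : ContDiff ℝ (⊤ : ℕ∞) p) (v : (Fin n → ℝ) × (Fin m → ℝ)) :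
    ContDiff ℝ (⊤ : ℕ∞) fun t => fderiv ℝ F (p t) v := by
  have h1 : ContDiff ℝ (⊤ : ℕ∞) (fderiv ℝ F) := hF.fderiv_right (by simp)
  exact (h1.comp hp).clm_apply contDiff_const

lemma nh_gram_det_ne_zero {m r : ℕ} {A : Fin r → Fin m → ℝ}
    (h : LinearIndependent ℝ A) :
    (Matrix.of fun s s' => ∑ j, A s j * A s' j : Matrix (Fin r) (Fin r) ℝ).det ≠ 0 := by
  classical
  rw [Ne, ← Matrix.exists_mulVec_eq_zero_iff]
  rintro ⟨v, hv, hmul⟩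
  apply hv
  have key : ∀ j, ∑ s, v s * A s j = 0 := by
    have h2 : ∑ j, (∑ s, v s * A s j) * (∑ s, v s * A s j) = 0 := by
      have h3 : ∑ s, v s * (Matrix.of fun s s' => ∑ j, A s j * A s' j :
          Matrix (Fin r) (Fin r) ℝ).mulVec v s = 0 := by
        rw [hmul]; simp
      rw [← h3]
      simp only [Matrix.mulVec, dotProduct, Matrix.of_apply,
        Finset.mul_sum, Finset.sum_mul]
      rw [Finset.sum_comm]
      apply Finset.sum_congr rfl
      intro j _
      rw [Finset.sum_comm]
      apply Finset.sum_congr rfl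
      intro s _
      apply Finset.sum_congr rfl
      intro s' _
      ring
    intro j
    have hnn : ∀ j ∈ (Finset.univ : Finset (Fin m)),
        0 ≤ (∑ s, v s * A s j) * (∑ s, v s * A s j) := fun j _ => mul_self_nonneg _
    have := (Finset.sum_eq_zero_iff_of_nonneg hnn).mp h2 j (Finset.mem_univ j)
    exact mul_self_eq_zero.mp this
  funext s
  refine Fintype.linearIndependent_iff.mp h v ?_ s
  funext j
  simpa [Finset.sum_apply, smul_eq_mul] using key j

lemma nh_mul_adj {r : ℕ} (M : Matrix (Fin r) (Fin r) ℝ) (s s₂ : Fin r) :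
    ∑ s₁, M s s₁ * M.adjugate s₁ s₂ = M.det * (if s = s₂ then 1 else 0) := by
  have := congrArg (fun N => N s s₂) (Matrix.mul_adjugate M)
  simpa [Matrix.mul_apply, Matrix.one_apply, mul_ite] using this

lemma nh_AP {m r : ℕ} (A : Fin r → Fin m → ℝ) (s : Fin r) (j' : Fin m) :
    ∑ j, A s j * ((Matrix.of fun a b => ∑ i, A a i * A b i : Matrix (Fin r) (Fin r) ℝ).det
        * (if j = j' then 1 else 0)
      - ∑ s₁, ∑ s₂, A s₁ j
          * (Matrix.of fun a b => ∑ i, A a i * A b i : Matrix (Fin r) (Fin r) ℝ).adjugate s₁ s₂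
          * A s₂ j') = 0 := by
  classical
  set Gr : Matrix (Fin r) (Fin r) ℝ := Matrix.of fun a b => ∑ i, A a i * A b i with hGr
  have h1 : ∑ j, A s j * (Gr.det * (if j = j' then 1 else 0)) = Gr.det * A s j' := by
    simp [mul_ite]
    ring
  have h2 : ∑ j, A s j * (∑ s₁, ∑ s₂, A s₁ j * Gr.adjugate s₁ s₂ * A s₂ j')
      = Gr.det * A s j' := by
    have step1 : ∑ j, A s j * (∑ s₁, ∑ s₂, A s₁ j * Gr.adjugate s₁ s₂ * A s₂ j')
        = ∑ s₁, ∑ s₂, (∑ j, A s j * A s₁ j) * Gr.adjugate s₁ s₂ * A s₂ j' := by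
      simp only [Finset.mul_sum, Finset.sum_mul]
      conv_lhs => rw [Finset.sum_comm]
      apply Finset.sum_congr rfl; intro s₁ _
      conv_lhs => rw [Finset.sum_comm]
      apply Finset.sum_congr rfl; intro s₂ _
      apply Finset.sum_congr rfl; intro j _
      ring
    rw [step1]
    have step2 : ∀ s₂, ∑ s₁, (∑ j, A s j * A s₁ j) * Gr.adjugate s₁ s₂
        = Gr.det * (if s = s₂ then 1 else 0) := by
      intro s₂
      have := nh_mul_adj Gr s s₂
      simpa [hGr] using this
    rw [Finset.sum_comm]
    calc ∑ s₂, ∑ s₁, (∑ j, A s j * A s₁ j) * Gr.adjugate s₁ s₂ * A s₂ j'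
        = ∑ s₂, (∑ s₁, (∑ j, A s j * A s₁ j) * Gr.adjugate s₁ s₂) * A s₂ j' := by
          apply Finset.sum_congr rfl; intro s₂ _; rw [Finset.sum_mul]
      _ = ∑ s₂, (Gr.det * (if s = s₂ then 1 else 0)) * A s₂ j' := by
          apply Finset.sum_congr rfl; intro s₂ _; rw [step2]
      _ = Gr.det * A s j' := by simp [mul_ite, ite_mul]
  calc ∑ j, A s j * (Gr.det * (if j = j' then 1 else 0)
        - ∑ s₁, ∑ s₂, A s₁ j * Gr.adjugate s₁ s₂ * A s₂ j')
      = (∑ j, A s j * (Gr.det * (if j = j' then 1 else 0)))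
        - ∑ j, A s j * (∑ s₁, ∑ s₂, A s₁ j * Gr.adjugate s₁ s₂ * A s₂ j') := by
        rw [← Finset.sum_sub_distrib]
        apply Finset.sum_congr rfl; intro j _; ring
    _ = 0 := by rw [h1, h2, sub_self]

lemma nh_repr {m r : ℕ} (A : Fin r → Fin m → ℝ) (G : Fin m → ℝ)
    (hdet : (Matrix.of fun a b => ∑ i, A a i * A b i : Matrix (Fin r) (Fin r) ℝ).det ≠ 0)
    (hPG : ∀ j' : Fin m, ∑ j,
      ((Matrix.of fun a b => ∑ i, A a i * A b i : Matrix (Fin r) (Fin r) ℝ).det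
          * (if j = j' then 1 else 0)
        - ∑ s₁, ∑ s₂, A s₁ j
            * (Matrix.of fun a b => ∑ i, A a i * A b i : Matrix (Fin r) (Fin r) ℝ).adjugate s₁ s₂
            * A s₂ j') * G j = 0) :
    ∀ j, G j = ∑ s,
      ((Matrix.of fun a b => ∑ i, A a i * A b i : Matrix (Fin r) (Fin r) ℝ).det⁻¹
        * ∑ s', (Matrix.of fun a b => ∑ i, A a i * A b i :
            Matrix (Fin r) (Fin r) ℝ).adjugate s' s * (∑ j', A s' j' * G j')) * A s j := by
  classical
  set Gr : Matrix (Fin r) (Fin r) ℝ := Matrix.of fun a b => ∑ i, A a i * A b i with hGr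
  intro j
  have h := hPG j
  have h1 : ∑ j₁, (Gr.det * (if j₁ = j then 1 else 0)) * G j₁ = Gr.det * G j := by
    simp [mul_ite, ite_mul]
  have h2 : Gr.det * G j
      = ∑ j₁, (∑ s₁, ∑ s₂, A s₁ j₁ * Gr.adjugate s₁ s₂ * A s₂ j) * G j₁ := by
    rw [← h1]
    rw [← sub_eq_zero]
    rw [← Finset.sum_sub_distrib]
    convert h using 2 with j₁
    ring
  have h3 : ∑ j₁, (∑ s₁, ∑ s₂, A s₁ j₁ * Gr.adjugate s₁ s₂ * A s₂ j) * G j₁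
      = ∑ s₂, (∑ s₁, Gr.adjugate s₁ s₂ * (∑ j₁, A s₁ j₁ * G j₁)) * A s₂ j := by
    simp only [Finset.mul_sum, Finset.sum_mul]
    conv_lhs => rw [Finset.sum_comm]
    conv_rhs => rw [Finset.sum_comm]
    apply Finset.sum_congr rfl; intro s₁ _
    conv_lhs => rw [Finset.sum_comm]
    apply Finset.sum_congr rfl; intro s₂ _
    apply Finset.sum_congr rfl; intro j₁ _
    ring
  have h4 : G j = Gr.det⁻¹ * ∑ s₂, (∑ s₁, Gr.adjugate s₁ s₂ * (∑ j₁, A s₁ j₁ * G j₁)) * A s₂ j := by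
    rw [← h3, ← h2, inv_mul_cancel_left₀ hdet]
  rw [h4, Finset.mul_sum]
  apply Finset.sum_congr rfl; intro s _
  ring

/-- Nonholonomically constrained Hamilton equations from restricted
variations.  If the first variation vanishes for all free `h` and all endpoint-fixed
`f` satisfying the d'Alembert condition `Σ_j ∂Φ^s/∂y^j(x,y) f^j = 0`, and the curve
satisfies the constraints `Φ^s(x,y) = 0`, then `y = ∂H/∂ξ`, and there are continuous
multipliers `μ_s` realizing the constrained Hamilton equations, together with
`ẋ = ρ ∂H/∂ξ` and `Φ^s(x, ∂H/∂ξ) = 0`. -/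
theorem nonholonomic_hamilton_equations {n m r : ℕ}
    (ρ σ : Fin n → Fin m → (Fin n → ℝ) → ℝ)
    (c : Fin m → Fin m → Fin m → (Fin n → ℝ) → ℝ)
    (hρ : ∀ a i, ContDiff ℝ (⊤ : ℕ∞) (ρ a i)) (hσ : ∀ a i, ContDiff ℝ (⊤ : ℕ∞) (σ a i))
    (hc : ∀ i j k, ContDiff ℝ (⊤ : ℕ∞) (c i j k))
    (H : (Fin n → ℝ) × (Fin m → ℝ) → ℝ) (hH : ContDiff ℝ (⊤ : ℕ∞) H)
    (Φ : Fin r → (Fin n → ℝ) × (Fin m → ℝ) → ℝ)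
    (hΦ : ∀ s, ContDiff ℝ (⊤ : ℕ∞) (Φ s))
    (t₀ t₁ : ℝ) (ht : t₀ < t₁)
    (x : ℝ → Fin n → ℝ) (y ξ : ℝ → Fin m → ℝ)
    (hx : ContDiff ℝ (⊤ : ℕ∞) x) (hy : ContDiff ℝ (⊤ : ℕ∞) y)
    (hξ : ContDiff ℝ (⊤ : ℕ∞) ξ)
    -- the fiber differentials of the constraints are linearly independent along the curve
    (hindep : ∀ t ∈ Set.Icc t₀ t₁, LinearIndependent ℝ
      (fun s : Fin r => (fun j : Fin m =>
        fderiv ℝ (Φ s) (x t, y t) ((0 : Fin n → ℝ), (Pi.single j 1 : Fin m → ℝ)))))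
    -- admissibility: ẋ^a = ρ^a_i(x) y^i
    (hadm : ∀ t ∈ Set.Icc t₀ t₁, ∀ a,
      deriv (fun τ => x τ a) t = ∑ i, ρ a i (x t) * y t i)
    -- the curve satisfies the constraints
    (hcon : ∀ t ∈ Set.Icc t₀ t₁, ∀ s, Φ s (x t, y t) = 0)
    -- vanishing of the first variation for d'Alembert variations
    (hvar : ∀ f h : ℝ → Fin m → ℝ, ContDiff ℝ (⊤ : ℕ∞) f → ContDiff ℝ (⊤ : ℕ∞) h →
      f t₀ = 0 → f t₁ = 0 →
      (∀ t ∈ Set.Icc t₀ t₁, ∀ s, (∑ j, fderiv ℝ (Φ s) (x t, y t)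
          ((0 : Fin n → ℝ), (Pi.single j 1 : Fin m → ℝ)) * f t j) = 0) →
      (∫ t in t₀..t₁,
        ((∑ j, f t j * (-(deriv (fun τ => ξ τ j) t)
            - (∑ a, σ a j (x t)
                * fderiv ℝ H (x t, ξ t) ((Pi.single a 1 : Fin n → ℝ), (0 : Fin m → ℝ)))
            + ∑ i, ∑ k, ξ t k * c i j k (x t) * y t i))
        + (∑ k, h t k * (y t k
            - fderiv ℝ H (x t, ξ t) ((0 : Fin n → ℝ), (Pi.single k 1 : Fin m → ℝ)))))) = 0) :
    (∀ t ∈ Set.Icc t₀ t₁, ∀ k,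
      y t k = fderiv ℝ H (x t, ξ t) ((0 : Fin n → ℝ), (Pi.single k 1 : Fin m → ℝ))) ∧
    (∃ μ : ℝ → Fin r → ℝ, ContinuousOn μ (Set.Icc t₀ t₁) ∧
      ∀ t ∈ Set.Icc t₀ t₁,
        (∀ j, deriv (fun τ => ξ τ j) t
          = (∑ i, ∑ k, ξ t k * c i j k (x t)
              * fderiv ℝ H (x t, ξ t) ((0 : Fin n → ℝ), (Pi.single i 1 : Fin m → ℝ)))
            - (∑ a, σ a j (x t)
              * fderiv ℝ H (x t, ξ t) ((Pi.single a 1 : Fin n → ℝ), (0 : Fin m → ℝ)))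
            + ∑ s, μ t s * fderiv ℝ (Φ s)
                (x t, fun k => fderiv ℝ H (x t, ξ t)
                  ((0 : Fin n → ℝ), (Pi.single k 1 : Fin m → ℝ)))
                ((0 : Fin n → ℝ), (Pi.single j 1 : Fin m → ℝ))) ∧
        (∀ a, deriv (fun τ => x τ a) t
          = ∑ k, ρ a k (x t)
              * fderiv ℝ H (x t, ξ t) ((0 : Fin n → ℝ), (Pi.single k 1 : Fin m → ℝ))) ∧
        (∀ s, Φ s (x t, fun k => fderiv ℝ H (x t, ξ t)
            ((0 : Fin n → ℝ), (Pi.single k 1 : Fin m → ℝ))) = 0)) := by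
  classical
  -- abbreviations
  obtain ⟨A, hA_def⟩ : ∃ A : ℝ → Fin r → Fin m → ℝ, A = fun t s j =>
      fderiv ℝ (Φ s) (x t, y t) ((0 : Fin n → ℝ), (Pi.single j 1 : Fin m → ℝ)) := ⟨_, rfl⟩
  obtain ⟨G, hG_def⟩ : ∃ G : ℝ → Fin m → ℝ, G = fun t j =>
      -(deriv (fun τ => ξ τ j) t)
        - (∑ a, σ a j (x t)
            * fderiv ℝ H (x t, ξ t) ((Pi.single a 1 : Fin n → ℝ), (0 : Fin m → ℝ)))
        + ∑ i, ∑ k, ξ t k * c i j k (x t) * y t i := ⟨_, rfl⟩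
  obtain ⟨Hd, hHd_def⟩ : ∃ Hd : ℝ → Fin m → ℝ, Hd = fun t k =>
      fderiv ℝ H (x t, ξ t) ((0 : Fin n → ℝ), (Pi.single k 1 : Fin m → ℝ)) := ⟨_, rfl⟩
  obtain ⟨P, hP_def⟩ : ∃ P : ℝ → Fin m → Fin m → ℝ, P = fun t j j' =>
      (Matrix.of fun a b => ∑ i, A t a i * A t b i : Matrix (Fin r) (Fin r) ℝ).det
          * (if j = j' then 1 else 0)
        - ∑ s₁, ∑ s₂, A t s₁ j
            * (Matrix.of fun a b => ∑ i, A t a i * A t b i :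
                Matrix (Fin r) (Fin r) ℝ).adjugate s₁ s₂
            * A t s₂ j' := ⟨_, rfl⟩
  -- smoothness facts
  have hxc : ∀ a, ContDiff ℝ (⊤ : ℕ∞) fun t => x t a := fun a => contDiff_pi.mp hx a
  have hyc : ∀ k, ContDiff ℝ (⊤ : ℕ∞) fun t => y t k := fun k => contDiff_pi.mp hy k
  have hξc : ∀ k, ContDiff ℝ (⊤ : ℕ∞) fun t => ξ t k := fun k => contDiff_pi.mp hξ k
  have hHdsm : ∀ k, ContDiff ℝ (⊤ : ℕ∞) fun t => Hd t k := by
    intro k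
    simp only [hHd_def]
    exact nh_contDiff_fderiv_apply hH (ContDiff.prodMk hx hξ) _
  have hHx : ∀ a, ContDiff ℝ (⊤ : ℕ∞) fun t =>
      fderiv ℝ H (x t, ξ t) ((Pi.single a 1 : Fin n → ℝ), (0 : Fin m → ℝ)) :=
    fun a => nh_contDiff_fderiv_apply hH (ContDiff.prodMk hx hξ) _
  have hAsm : ∀ s j, ContDiff ℝ (⊤ : ℕ∞) fun t => A t s j := by
    intro s j
    simp only [hA_def]
    exact nh_contDiff_fderiv_apply (hΦ s) (ContDiff.prodMk hx hy) _
  have hDξ : ∀ j, ContDiff ℝ (⊤ : ℕ∞) fun t => deriv (fun τ => ξ τ j) t :=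
    fun j => (contDiff_infty_iff_deriv.mp (hξc j)).2
  have hGsm : ∀ j, ContDiff ℝ (⊤ : ℕ∞) fun t => G t j := by
    intro j
    simp only [hG_def]
    exact ((hDξ j).neg.sub (ContDiff.sum fun a _ => ((hσ a j).comp hx).mul (hHx a))).add
      (ContDiff.sum fun i _ => ContDiff.sum fun k _ =>
        ((hξc k).mul ((hc i j k).comp hx)).mul (hyc i))
  have hGramEnt : ∀ a b, ContDiff ℝ (⊤ : ℕ∞) fun t =>
      (Matrix.of fun a b => ∑ i, A t a i * A t b i : Matrix (Fin r) (Fin r) ℝ) a b := by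
    intro a b
    simp only [Matrix.of_apply]
    exact ContDiff.sum fun i _ => (hAsm a i).mul (hAsm b i)
  have hdet_sm : ContDiff ℝ (⊤ : ℕ∞) fun t =>
      (Matrix.of fun a b => ∑ i, A t a i * A t b i : Matrix (Fin r) (Fin r) ℝ).det :=
    nh_contDiff_det hGramEnt
  have hadj_sm : ∀ s s', ContDiff ℝ (⊤ : ℕ∞) fun t =>
      (Matrix.of fun a b => ∑ i, A t a i * A t b i :
        Matrix (Fin r) (Fin r) ℝ).adjugate s s' :=
    fun s s' => nh_contDiff_adjugate hGramEnt s s'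
  have hPsm : ∀ j j', ContDiff ℝ (⊤ : ℕ∞) fun t => P t j j' := by
    intro j j'
    simp only [hP_def]
    exact (hdet_sm.mul contDiff_const).sub
      (ContDiff.sum fun s₁ _ => ContDiff.sum fun s₂ _ =>
        ((hAsm s₁ j).mul (hadj_sm s₁ s₂)).mul (hAsm s₂ j'))
  -- folded version of the variational hypothesis
  have hvarG : ∀ f h : ℝ → Fin m → ℝ, ContDiff ℝ (⊤ : ℕ∞) f → ContDiff ℝ (⊤ : ℕ∞) h →
      f t₀ = 0 → f t₁ = 0 →
      (∀ t ∈ Set.Icc t₀ t₁, ∀ s, (∑ j, A t s j * f t j) = 0) →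
      (∫ t in t₀..t₁,
        ((∑ j, f t j * G t j) + ∑ k, h t k * (y t k - Hd t k))) = 0 := by
    intro f h hf hh hf0 hf1 hcon'
    have := hvar f h hf hh hf0 hf1 (by simpa only [hA_def] using hcon')
    simpa only [hG_def, hHd_def] using this
  -- Part 1 : y = ∂H/∂ξ
  have part1 : ∀ t ∈ Set.Icc t₀ t₁, ∀ k, y t k = Hd t k := by
    have h0 := hvarG (fun _ _ => 0) (fun t k => y t k - Hd t k) contDiff_const
      (contDiff_pi.mpr fun k => (hyc k).sub (hHdsm k)) rfl rfl
      (by intro t _ s; simp)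
    simp only [zero_mul, Finset.sum_const_zero, zero_add] at h0
    have hcont : Continuous fun t => ∑ k, (y t k - Hd t k) * (y t k - Hd t k) :=
      continuous_finset_sum _ fun k _ =>
        (((hyc k).continuous.sub (hHdsm k).continuous).mul
          ((hyc k).continuous.sub (hHdsm k).continuous))
    have hzero := nh_zero_of_integral_zero hcont ht
      (fun t _ => Finset.sum_nonneg fun k _ => mul_self_nonneg _) h0
    intro t htI k
    have hk := (Finset.sum_eq_zero_iff_of_nonneg
      (fun k (_ : k ∈ Finset.univ) => mul_self_nonneg (y t k - Hd t k))).mp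
      (hzero t htI) k (Finset.mem_univ k)
    have := mul_self_eq_zero.mp hk
    linarith [this]
  -- Part 2 : Lagrange multipliers
  have hdetne : ∀ t ∈ Set.Icc t₀ t₁,
      (Matrix.of fun a b => ∑ i, A t a i * A t b i : Matrix (Fin r) (Fin r) ℝ).det ≠ 0 := by
    intro t htI
    apply nh_gram_det_ne_zero
    simp only [hA_def]
    exact hindep t htI
  have hPG : ∀ j' : Fin m, ∀ t ∈ Set.Icc t₀ t₁, ∑ j, P t j j' * G t j = 0 := by
    intro j'
    have hAP : ∀ t s, ∑ j, A t s j * P t j j' = 0 := by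
      intro t s
      simp only [hP_def]
      exact nh_AP (A t) s j'
    have hgsm : ContDiff ℝ (⊤ : ℕ∞) fun t => ∑ j, P t j j' * G t j :=
      ContDiff.sum fun j _ => (hPsm j j').mul (hGsm j)
    have hwsm : ContDiff ℝ (⊤ : ℕ∞) fun t =>
        (t - t₀) * (t₁ - t) * ∑ j, P t j j' * G t j :=
      ((contDiff_id.sub contDiff_const).mul (contDiff_const.sub contDiff_id)).mul hgsm
    have hfsm : ContDiff ℝ (⊤ : ℕ∞) fun t => fun j =>
        ((t - t₀) * (t₁ - t) * ∑ j'', P t j'' j' * G t j'') * P t j j' :=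
      contDiff_pi.mpr fun j => hwsm.mul (hPsm j j')
    have h0 := hvarG
      (fun t j => ((t - t₀) * (t₁ - t) * ∑ j'', P t j'' j' * G t j'') * P t j j')
      (fun _ _ => 0) hfsm contDiff_const
      (by funext j; simp) (by funext j; simp)
      (by
        intro t _ s
        have e1 : ∀ L : ℝ, ∑ j, A t s j * (L * P t j j') = L * ∑ j, A t s j * P t j j' :=
          fun L => by
            rw [Finset.mul_sum]; exact Finset.sum_congr rfl fun j _ => by ring
        calc ∑ j, A t s j * (((t - t₀) * (t₁ - t) * ∑ j'', P t j'' j' * G t j'') * P t j j')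
            = ((t - t₀) * (t₁ - t) * ∑ j'', P t j'' j' * G t j'')
              * ∑ j, A t s j * P t j j' := e1 _
          _ = 0 := by rw [hAP t s, mul_zero])
    simp only [zero_mul, Finset.sum_const_zero, add_zero] at h0
    have hint : (∫ t in t₀..t₁,
        (t - t₀) * (t₁ - t) * ((∑ j, P t j j' * G t j) * (∑ j, P t j j' * G t j))) = 0 := by
      rw [← h0]
      apply intervalIntegral.integral_congr
      intro t _
      have e1 : ∀ L : ℝ, ∑ j, (L * P t j j') * G t j = L * ∑ j, P t j j' * G t j :=
        fun L => by
          rw [Finset.mul_sum]; exact Finset.sum_congr rfl fun j _ => by ring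
      show (t - t₀) * (t₁ - t) * ((∑ j, P t j j' * G t j) * ∑ j, P t j j' * G t j)
        = ∑ j, ((t - t₀) * (t₁ - t) * ∑ j'', P t j'' j' * G t j'') * P t j j' * G t j
      rw [e1]
      ring
    have hcont : Continuous fun t =>
        (t - t₀) * (t₁ - t) * ((∑ j, P t j j' * G t j) * (∑ j, P t j j' * G t j)) := by
      have hgc : Continuous fun t => ∑ j, P t j j' * G t j :=
        continuous_finset_sum _ fun j _ => (hPsm j j').continuous.mul (hGsm j).continuous
      exact (((continuous_id.sub continuous_const).mul
        (continuous_const.sub continuous_id)).mul (hgc.mul hgc))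
    have hzero := nh_zero_of_integral_zero hcont ht
      (fun t htI => mul_nonneg (mul_nonneg (by linarith [htI.1]) (by linarith [htI.2]))
        (mul_self_nonneg _)) hint
    have hIoo : ∀ t ∈ Set.Ioo t₀ t₁, (fun t => ∑ j, P t j j' * G t j) t = 0 := by
      intro t htI
      have hw : 0 < (t - t₀) * (t₁ - t) :=
        mul_pos (by linarith [htI.1]) (by linarith [htI.2])
      have := hzero t (Set.Ioo_subset_Icc_self htI)
      have h2 : (∑ j, P t j j' * G t j) * (∑ j, P t j j' * G t j) = 0 := by
        rcases mul_eq_zero.mp this with h | h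
        · exact absurd h hw.ne'
        · exact h
      exact mul_self_eq_zero.mp h2
    exact nh_eqOn_Icc
      (continuous_finset_sum _ fun j _ => (hPsm j j').continuous.mul (hGsm j).continuous)
      ht hIoo
  -- representation of G through the constraint gradients
  have hrepr : ∀ t ∈ Set.Icc t₀ t₁, ∀ j, G t j = ∑ s,
      ((Matrix.of fun a b => ∑ i, A t a i * A t b i : Matrix (Fin r) (Fin r) ℝ).det⁻¹
        * ∑ s', (Matrix.of fun a b => ∑ i, A t a i * A t b i :
            Matrix (Fin r) (Fin r) ℝ).adjugate s' s * (∑ j', A t s' j' * G t j')) * A t s j := by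
    intro t htI
    apply nh_repr (A t) (G t) (hdetne t htI)
    intro j'
    have := hPG j' t htI
    simp only [hP_def] at this
    convert this using 2
  -- the multipliers
  have part1' : ∀ t ∈ Set.Icc t₀ t₁, ∀ k, y t k
      = fderiv ℝ H (x t, ξ t) ((0 : Fin n → ℝ), (Pi.single k 1 : Fin m → ℝ)) := by
    simpa only [hHd_def] using part1
  refine ⟨part1', ⟨fun t s =>
    -(((Matrix.of fun a b => ∑ i, A t a i * A t b i : Matrix (Fin r) (Fin r) ℝ).det⁻¹
      * ∑ s', (Matrix.of fun a b => ∑ i, A t a i * A t b i :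
          Matrix (Fin r) (Fin r) ℝ).adjugate s' s * (∑ j', A t s' j' * G t j'))), ?_, ?_⟩⟩
  · -- continuity
    apply continuousOn_pi.mpr
    intro s
    apply ContinuousOn.neg
    apply ContinuousOn.mul
    · exact (hdet_sm.continuous.continuousOn).inv₀ (fun t htI => hdetne t htI)
    · exact (continuous_finset_sum _ fun s' _ => ((hadj_sm s' s).continuous.mul
        (continuous_finset_sum _ fun j' _ =>
          (hAsm s' j').continuous.mul (hGsm j').continuous))).continuousOn
  · intro t htI
    have hyfun : (fun k => fderiv ℝ H (x t, ξ t)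
        ((0 : Fin n → ℝ), (Pi.single k 1 : Fin m → ℝ))) = y t := by
      funext k
      have := part1 t htI k
      simp only [hHd_def] at this
      exact this.symm
    have hHdy : ∀ k, Hd t k = y t k := fun k => (part1 t htI k).symm
    refine ⟨?_, ?_, ?_⟩
    · -- ξ̇ equation
      intro j
      have hG := hrepr t htI j
      rw [hyfun]
      have hfd : ∀ i, fderiv ℝ H (x t, ξ t)
          ((0 : Fin n → ℝ), (Pi.single i 1 : Fin m → ℝ)) = y t i := by
        intro i
        have := part1 t htI i
        simp only [hHd_def] at this
        exact this.symm
      simp only [hfd]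
      have hfold : ∀ s : Fin r, fderiv ℝ (Φ s) (x t, y t)
          ((0 : Fin n → ℝ), (Pi.single j 1 : Fin m → ℝ)) = A t s j := by
        intro s; rw [hA_def]
      simp only [hfold]
      have hGt : G t j = -(deriv (fun τ => ξ τ j) t)
          - (∑ a, σ a j (x t)
              * fderiv ℝ H (x t, ξ t) ((Pi.single a 1 : Fin n → ℝ), (0 : Fin m → ℝ)))
          + ∑ i, ∑ k, ξ t k * c i j k (x t) * y t i := by
        rw [hG_def]
      simp only [neg_mul]
      rw [Finset.sum_neg_distrib, ← hG, hGt]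
      ring
    · -- ẋ equation
      intro a
      have := hadm t htI a
      rw [this]
      apply Finset.sum_congr rfl
      intro k _
      have hk := part1 t htI k
      simp only [hHd_def] at hk
      rw [← hk]
    · -- constraints
      intro s
      rw [hyfun]
      exact hcon t htI s
end

section
/- (Euler–Lagrange equations on a general algebroid from the variational principle, coordinate version.) Let M = ℝⁿ, fiber ℝᵐ, smooth structure functions ρ^a_i, σ^a_i, c^k_{ij}, smooth L : ℝⁿ × ℝᵐ → ℝ. Let γ(t) = (x(t), y(t)) be smooth and admissible (ẋ^a = ρ^a_i(x) y^i) on [t₀,t₁]. Then the first variation ∫_{t₀}^{t₁} [ σ^a_i(x) b^i ∂L/∂x^a(γ) + (ḃ^k + c^k_{ij}(x) y^i b^j) ∂L/∂y^k(γ) ] dt vanishes for all smooth b : [t₀,t₁] → ℝᵐ with b(t₀) = b(t₁) = 0 if and only if γ satisfies d/dt (∂L/∂y^i(x,y)) = σ^a_i(x) ∂L/∂x^a(x,y) + c^k_{ji}(x) y^j ∂L/∂y^k(x,y) for all i and t. -/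
open scoped BigOperators

open Set
lemma fund_lemma {t₀ t₁ : ℝ} (ht : t₀ < t₁) {g : ℝ → ℝ} (hg : ContDiff ℝ (⊤ : ℕ∞) g)
    (H : ∀ b : ℝ → ℝ, ContDiff ℝ (⊤ : ℕ∞) b → b t₀ = 0 → b t₁ = 0 →
      (∫ t in t₀..t₁, b t * g t) = 0) :
    ∀ t ∈ Set.Icc t₀ t₁, g t = 0 := by
  have hIoo : ∀ s ∈ Set.Ioo t₀ t₁, g s = 0 := by
    intro s hs
    by_contra hgs
    have hr0 : 0 < min (s - t₀) (t₁ - s) := lt_min (by linarith [hs.1]) (by linarith [hs.2])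
    set r : ℝ := min (s - t₀) (t₁ - s) with hrdef
    let φ : ContDiffBump s := ⟨r / 2, r, by positivity, by linarith⟩
    have hb : ContDiff ℝ (⊤ : ℕ∞) (fun τ => φ τ * g τ) := φ.contDiff.mul hg
    have hb0 : φ t₀ * g t₀ = 0 := by
      rw [φ.zero_of_le_dist, zero_mul]
      rw [Real.dist_eq, abs_of_nonpos (by linarith [hs.1])]
      simp only [φ]
      have : r ≤ s - t₀ := min_le_left _ _
      linarith
    have hb1 : φ t₁ * g t₁ = 0 := by
      rw [φ.zero_of_le_dist, zero_mul]
      rw [Real.dist_eq, abs_of_nonneg (by linarith [hs.2])]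
      simp only [φ]
      have : r ≤ t₁ - s := min_le_right _ _
      linarith
    have hzero := H (fun τ => φ τ * g τ) hb hb0 hb1
    have hcont : Continuous (fun τ => φ τ * g τ * g τ) :=
      (φ.continuous.mul hg.continuous).mul hg.continuous
    have hpos : 0 < ∫ t in t₀..t₁, (fun τ => φ τ * g τ) t * g t := by
      rw [intervalIntegral.integral_pos_iff_support_of_nonneg_ae]
      · refine ⟨ht, ?_⟩
        -- find a ball around s where the function is positive
        have hfs : 0 < φ s * g s * g s := by
          have h1 : φ s = 1 := φ.one_of_mem_closedBall (Metric.mem_closedBall_self φ.rIn_pos.le)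
          rw [h1, one_mul]
          exact mul_self_pos.mpr hgs
        have hopen : IsOpen {t : ℝ | 0 < φ t * g t * g t} :=
          isOpen_lt continuous_const hcont
        obtain ⟨ε, hε, hball⟩ := Metric.isOpen_iff.mp (hopen.inter isOpen_Ioo) s ⟨hfs, hs⟩
        have hsub : Set.Ioo (s - ε) (s + ε) ⊆
            Function.support (fun t => φ t * g t * g t) ∩ Set.Ioc t₀ t₁ := by
          intro u hu
          have hu' : u ∈ Metric.ball s ε := by
            rw [Real.ball_eq_Ioo]; exact hu
          obtain ⟨h1, h2⟩ := hball hu'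
          exact ⟨ne_of_gt h1, Set.Ioo_subset_Ioc_self h2⟩
        calc (0 : ENNReal) < MeasureTheory.volume (Set.Ioo (s - ε) (s + ε)) := by
              rw [Real.volume_Ioo]
              simp only [ENNReal.ofReal_pos]
              linarith
          _ ≤ _ := MeasureTheory.measure_mono hsub
      · filter_upwards with t
        show 0 ≤ φ t * g t * g t
        rw [mul_assoc]
        exact mul_nonneg φ.nonneg (mul_self_nonneg _)
      · exact hcont.intervalIntegrable _ _
    rw [hzero] at hpos
    exact lt_irrefl 0 hpos
  intro t htI
  have h1 : Set.EqOn g 0 (Set.Ioo t₀ t₁) := fun u hu => hIoo u hu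
  have heq := h1.closure hg.continuous continuous_const
  rw [closure_Ioo ht.ne] at heq
  exact heq htI

lemma aux_var {n m : ℕ} (t₀ t₁ : ℝ) (ht : t₀ < t₁)
    (A : Fin n → Fin m → ℝ → ℝ) (C : Fin m → Fin m → Fin m → ℝ → ℝ)
    (q : Fin n → ℝ → ℝ) (p : Fin m → ℝ → ℝ)
    (hA : ∀ a i, ContDiff ℝ (⊤ : ℕ∞) (A a i)) (hC : ∀ i j k, ContDiff ℝ (⊤ : ℕ∞) (C i j k))
    (hq : ∀ a, ContDiff ℝ (⊤ : ℕ∞) (q a)) (hp : ∀ k, ContDiff ℝ (⊤ : ℕ∞) (p k)) :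
    (∀ b : ℝ → Fin m → ℝ, ContDiff ℝ (⊤ : ℕ∞) b → b t₀ = 0 → b t₁ = 0 →
      (∫ t in t₀..t₁,
        ((∑ a, ∑ i, A a i t * b t i * q a t)
        + (∑ k, (deriv (fun τ => b τ k) t + ∑ i, ∑ j, C i j k t * b t j) * p k t))) = 0)
    ↔
    (∀ i, ∀ t ∈ Set.Icc t₀ t₁,
      deriv (p i) t = (∑ a, A a i t * q a t) + (∑ j, ∑ k, C j i k t * p k t)) := by
  classical
  have hone : (1 : WithTop ℕ∞) ≤ ((⊤ : ℕ∞) : WithTop ℕ∞) := by exact_mod_cast le_top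
  have hdp : ∀ i, ContDiff ℝ (⊤ : ℕ∞) (deriv (p i)) := fun i =>
    (contDiff_infty_iff_deriv.mp (hp i)).2
  have hAq : ∀ i, ContDiff ℝ (⊤ : ℕ∞) (fun t => ∑ a, A a i t * q a t) := fun i =>
    ContDiff.sum fun a _ => (hA a i).mul (hq a)
  have hCp : ∀ i, ContDiff ℝ (⊤ : ℕ∞) (fun t => ∑ j, ∑ k, C j i k t * p k t) := fun i =>
    ContDiff.sum fun j _ => ContDiff.sum fun k _ => (hC j i k).mul (hp k)
  have hgc : ∀ i, ContDiff ℝ (⊤ : ℕ∞) (fun t =>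
      (∑ a, A a i t * q a t) + (∑ j, ∑ k, C j i k t * p k t) - deriv (p i) t) := fun i =>
    ((hAq i).add (hCp i)).sub (hdp i)
  -- pointwise key identity
  have key : ∀ b : ℝ → Fin m → ℝ, ContDiff ℝ (⊤ : ℕ∞) b → ∀ t : ℝ,
      ((∑ a, ∑ i, A a i t * b t i * q a t)
        + (∑ k, (deriv (fun τ => b τ k) t + ∑ i, ∑ j, C i j k t * b t j) * p k t))
      = (∑ i, deriv (fun τ => b τ i * p i τ) t)
        + ∑ i, b t i * ((∑ a, A a i t * q a t) + (∑ j, ∑ k, C j i k t * p k t)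
            - deriv (p i) t) := by
    intro b hb t
    have hbd : ∀ i, DifferentiableAt ℝ (fun τ => b τ i) t := fun i =>
      ((contDiff_pi.mp hb i).differentiable (by simp)).differentiableAt
    have hpd : ∀ i, DifferentiableAt ℝ (p i) t := fun i =>
      ((hp i).differentiable (by simp)).differentiableAt
    have hder : ∀ i, deriv (fun τ => b τ i * p i τ) t
        = deriv (fun τ => b τ i) t * p i t + b t i * deriv (p i) t := fun i =>
      deriv_fun_mul (hbd i) (hpd i)
    have hL1 : ∑ a, ∑ i, A a i t * b t i * q a t
        = ∑ i, b t i * ∑ a, A a i t * q a t := by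
      rw [Finset.sum_comm]
      refine Finset.sum_congr rfl fun i _ => ?_
      rw [Finset.mul_sum]
      exact Finset.sum_congr rfl fun a _ => by ring
    have hL3 : ∑ k, (∑ i, ∑ j, C i j k t * b t j) * p k t
        = ∑ i, b t i * ∑ j, ∑ k, C j i k t * p k t := by
      calc ∑ k, (∑ i, ∑ j, C i j k t * b t j) * p k t
          = ∑ k, ∑ i, ∑ j, C i j k t * b t j * p k t := by
            refine Finset.sum_congr rfl fun k _ => ?_
            rw [Finset.sum_mul]
            exact Finset.sum_congr rfl fun i _ => by rw [Finset.sum_mul]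
        _ = ∑ i, ∑ k, ∑ j, C i j k t * b t j * p k t := Finset.sum_comm
        _ = ∑ i, ∑ j, ∑ k, C i j k t * b t j * p k t :=
            Finset.sum_congr rfl fun i _ => Finset.sum_comm
        _ = ∑ j, ∑ i, ∑ k, C i j k t * b t j * p k t := Finset.sum_comm
        _ = ∑ i, b t i * ∑ j, ∑ k, C j i k t * p k t := by
            refine Finset.sum_congr rfl fun i _ => ?_
            rw [Finset.mul_sum]
            refine Finset.sum_congr rfl fun j _ => ?_
            rw [Finset.mul_sum]
            exact Finset.sum_congr rfl fun k _ => by ring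
    have hL2 : ∑ k, (deriv (fun τ => b τ k) t + ∑ i, ∑ j, C i j k t * b t j) * p k t
        = (∑ k, deriv (fun τ => b τ k) t * p k t)
          + ∑ k, (∑ i, ∑ j, C i j k t * b t j) * p k t := by
      rw [← Finset.sum_add_distrib]
      exact Finset.sum_congr rfl fun k _ => by ring
    have hR1 : ∑ i, deriv (fun τ => b τ i * p i τ) t
        = (∑ i, deriv (fun τ => b τ i) t * p i t) + ∑ i, b t i * deriv (p i) t := by
      simp only [hder]
      rw [Finset.sum_add_distrib]
    have hR2 : ∑ i, b t i * ((∑ a, A a i t * q a t) + (∑ j, ∑ k, C j i k t * p k t)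
          - deriv (p i) t)
        = (∑ i, b t i * ∑ a, A a i t * q a t)
          + (∑ i, b t i * ∑ j, ∑ k, C j i k t * p k t)
          - ∑ i, b t i * deriv (p i) t := by
      simp only [mul_sub, mul_add, Finset.sum_sub_distrib, Finset.sum_add_distrib]
    rw [hL1, hL2, hL3, hR1, hR2]
    ring
  -- integral reduction
  have hstep : ∀ b : ℝ → Fin m → ℝ, ContDiff ℝ (⊤ : ℕ∞) b → b t₀ = 0 → b t₁ = 0 →
      (∫ t in t₀..t₁,
        ((∑ a, ∑ i, A a i t * b t i * q a t)
        + (∑ k, (deriv (fun τ => b τ k) t + ∑ i, ∑ j, C i j k t * b t j) * p k t)))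
      = ∫ t in t₀..t₁, ∑ i, b t i * ((∑ a, A a i t * q a t)
          + (∑ j, ∑ k, C j i k t * p k t) - deriv (p i) t) := by
    intro b hb h0 h1
    have hbi : ∀ i, ContDiff ℝ (⊤ : ℕ∞) (fun τ => b τ i) := fun i => contDiff_pi.mp hb i
    have hbp : ∀ i, ContDiff ℝ (⊤ : ℕ∞) (fun τ => b τ i * p i τ) := fun i =>
      (hbi i).mul (hp i)
    have hint1 : IntervalIntegrable (fun t => ∑ i, deriv (fun τ => b τ i * p i τ) t)
        MeasureTheory.volume t₀ t₁ := by
      refine (continuous_finset_sum _ fun i _ => ?_).intervalIntegrable _ _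
      exact (contDiff_infty_iff_deriv.mp (hbp i)).2.continuous
    have hint2 : IntervalIntegrable (fun t => ∑ i, b t i * ((∑ a, A a i t * q a t)
        + (∑ j, ∑ k, C j i k t * p k t) - deriv (p i) t)) MeasureTheory.volume t₀ t₁ := by
      refine (continuous_finset_sum _ fun i _ => ?_).intervalIntegrable _ _
      exact ((hbi i).continuous).mul (hgc i).continuous
    rw [intervalIntegral.integral_congr (g := fun t =>
        (∑ i, deriv (fun τ => b τ i * p i τ) t)
        + ∑ i, b t i * ((∑ a, A a i t * q a t) + (∑ j, ∑ k, C j i k t * p k t)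
            - deriv (p i) t)) (fun t _ => key b hb t)]
    rw [intervalIntegral.integral_add hint1 hint2]
    have hzero : (∫ t in t₀..t₁, ∑ i, deriv (fun τ => b τ i * p i τ) t) = 0 := by
      rw [intervalIntegral.integral_finset_sum
        (fun i _ => ((contDiff_infty_iff_deriv.mp (hbp i)).2.continuous.intervalIntegrable _ _))]
      refine Finset.sum_eq_zero fun i _ => ?_
      rw [intervalIntegral.integral_deriv_eq_sub
        (fun τ _ => ((hbp i).differentiable (by simp)).differentiableAt)
        ((contDiff_infty_iff_deriv.mp (hbp i)).2.continuous.intervalIntegrable _ _)]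
      have e0 : b t₀ i = 0 := by rw [h0]; rfl
      have e1 : b t₁ i = 0 := by rw [h1]; rfl
      simp [e0, e1]
    rw [hzero, zero_add]
  constructor
  · intro H i t htI
    have hfund := fund_lemma ht (hgc i) ?_ t htI
    · -- hfund : g i t = 0, conclude EL
      have := hfund
      linarith [this]
    · intro btest hbt hbt0 hbt1
      set b : ℝ → Fin m → ℝ := fun τ j => if j = i then btest τ else 0 with hbdef
      have hbC : ContDiff ℝ (⊤ : ℕ∞) b := by
        rw [hbdef]
        refine contDiff_pi.mpr fun j => ?_
        by_cases hj : j = i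
        · simpa [hj] using hbt
        · simpa [hj] using contDiff_const (c := (0 : ℝ))
      have hb0 : b t₀ = 0 := by
        funext j; by_cases hj : j = i <;> simp [hbdef, hj, hbt0]
      have hb1 : b t₁ = 0 := by
        funext j; by_cases hj : j = i <;> simp [hbdef, hj, hbt1]
      have hInt := H b hbC hb0 hb1
      rw [hstep b hbC hb0 hb1] at hInt
      rw [← hInt]
      refine intervalIntegral.integral_congr fun s _ => ?_
      have : ∀ j : Fin m, b s j * ((∑ a, A a j s * q a s)
          + (∑ j', ∑ k, C j' j k s * p k s) - deriv (p j) s)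
          = if j = i then btest s * ((∑ a, A a j s * q a s)
          + (∑ j', ∑ k, C j' j k s * p k s) - deriv (p j) s) else 0 := by
        intro j; by_cases hj : j = i <;> simp [hbdef, hj]
      rw [show (btest s * ((∑ a, A a i s * q a s)
          + (∑ j', ∑ k, C j' i k s * p k s) - deriv (p i) s)) = _ from rfl]
      simp only [this]
      rw [Finset.sum_ite_eq' Finset.univ i]
      simp
  · intro H b hb h0 h1
    rw [hstep b hb h0 h1]
    have : Set.EqOn (fun t => ∑ i, b t i * ((∑ a, A a i t * q a t)
        + (∑ j, ∑ k, C j i k t * p k t) - deriv (p i) t)) (fun _ => (0 : ℝ))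
        (Set.uIcc t₀ t₁) := by
      intro s hs
      rw [Set.uIcc_of_le ht.le] at hs
      refine Finset.sum_eq_zero fun i _ => ?_
      have := H i s hs
      have hz : (∑ a, A a i s * q a s) + (∑ j, ∑ k, C j i k s * p k s)
          - deriv (p i) s = 0 := by linarith
      rw [hz, mul_zero]
    rw [intervalIntegral.integral_congr this]
    simp

/-- Euler–Lagrange equations on a general algebroid from the variational
principle (coordinate version): for an admissible curve `γ = (x,y)`, the first
variation `∫ [σ^a_i b^i ∂L/∂x^a + (ḃ^k + c^k_{ij} y^i b^j) ∂L/∂y^k] dt` vanishes for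
all smooth `b` vanishing at the endpoints iff `γ` satisfies the algebroid
Euler–Lagrange equations `d/dt(∂L/∂y^i) = σ^a_i ∂L/∂x^a + c^k_{ji} y^j ∂L/∂y^k`. -/
theorem algebroid_euler_lagrange {n m : ℕ}
    (ρ σ : Fin n → Fin m → (Fin n → ℝ) → ℝ)
    (c : Fin m → Fin m → Fin m → (Fin n → ℝ) → ℝ)
    (hρ : ∀ a i, ContDiff ℝ (⊤ : ℕ∞) (ρ a i)) (hσ : ∀ a i, ContDiff ℝ (⊤ : ℕ∞) (σ a i))
    (hc : ∀ i j k, ContDiff ℝ (⊤ : ℕ∞) (c i j k))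
    (L : (Fin n → ℝ) × (Fin m → ℝ) → ℝ) (hL : ContDiff ℝ (⊤ : ℕ∞) L)
    (t₀ t₁ : ℝ) (ht : t₀ < t₁)
    (x : ℝ → Fin n → ℝ) (y : ℝ → Fin m → ℝ)
    (hx : ContDiff ℝ (⊤ : ℕ∞) x) (hy : ContDiff ℝ (⊤ : ℕ∞) y)
    -- admissibility: ẋ^a = ρ^a_i(x) y^i
    (hadm : ∀ t ∈ Set.Icc t₀ t₁, ∀ a,
      deriv (fun τ => x τ a) t = ∑ i, ρ a i (x t) * y t i) :
    (∀ b : ℝ → Fin m → ℝ, ContDiff ℝ (⊤ : ℕ∞) b → b t₀ = 0 → b t₁ = 0 →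
      (∫ t in t₀..t₁,
        ((∑ a, ∑ i, σ a i (x t) * b t i
            * fderiv ℝ L (x t, y t) ((Pi.single a 1 : Fin n → ℝ), (0 : Fin m → ℝ)))
        + (∑ k, (deriv (fun τ => b τ k) t
              + ∑ i, ∑ j, c i j k (x t) * y t i * b t j)
            * fderiv ℝ L (x t, y t) ((0 : Fin n → ℝ), (Pi.single k 1 : Fin m → ℝ))))) = 0)
    ↔
    (∀ i, ∀ t ∈ Set.Icc t₀ t₁,
      deriv (fun τ => fderiv ℝ L (x τ, y τ)
          ((0 : Fin n → ℝ), (Pi.single i 1 : Fin m → ℝ))) t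
        = (∑ a, σ a i (x t)
            * fderiv ℝ L (x t, y t) ((Pi.single a 1 : Fin n → ℝ), (0 : Fin m → ℝ)))
          + (∑ j, ∑ k, c j i k (x t) * y t j
            * fderiv ℝ L (x t, y t) ((0 : Fin n → ℝ), (Pi.single k 1 : Fin m → ℝ)))) := by
  have hγ : ContDiff ℝ (⊤ : ℕ∞) (fun t => (x t, y t)) := hx.prodMk hy
  have hfd : ContDiff ℝ (⊤ : ℕ∞) (fderiv ℝ L) := hL.fderiv_right (by simp)
  have hpair : ∀ v : (Fin n → ℝ) × (Fin m → ℝ),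
      ContDiff ℝ (⊤ : ℕ∞) (fun t => fderiv ℝ L (x t, y t) v) := fun v =>
    (hfd.comp hγ).clm_apply contDiff_const
  exact aux_var t₀ t₁ ht
    (fun a i t => σ a i (x t))
    (fun i j k t => c i j k (x t) * y t i)
    (fun a t => fderiv ℝ L (x t, y t) ((Pi.single a 1 : Fin n → ℝ), (0 : Fin m → ℝ)))
    (fun k t => fderiv ℝ L (x t, y t) ((0 : Fin n → ℝ), (Pi.single k 1 : Fin m → ℝ)))
    (fun a i => (hσ a i).comp hx)
    (fun i j k => ((hc i j k).comp hx).mul (contDiff_pi.mp hy i))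
    (fun a => hpair _) (fun k => hpair _)
end
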